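/- arXiv:2208.04516 — 9 statements merged into one kernel-verified Lean document; each statement's English description precedes it below -/
import Mathlib

section
/- There exists a two-player mixed capability game in which increasing one player's capability strictly decreases that player's payoff at the unique pure Nash equilibrium. Concretely: in the 2×2 bimatrix game with row player payoff matrix u1 = [[1,-1],[2,0]] and column player payoff matrix u2 = [[2,1],[1,2]], when the row player is restricted to the first row, the unique pure Nash equilibrium is (row 1, column 1) with payoffs (1,2); when the row player may use both rows, the unique pure Nash equilibrium is (row 2, column 2) with payoffs (0,2). -/
/-- Row player payoff matrix. -/
def u1 : Fin 2 → Fin 2 → ℤ := ![![1, -1], ![2, 0]]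
/-- Column player payoff matrix. -/
def u2 : Fin 2 → Fin 2 → ℤ := ![![2, 1], ![1, 2]]

/-- `(i, j)` is a pure Nash equilibrium when the row player is restricted to rows in `R`
(the column player always has both columns). -/
def isNE (R : Finset (Fin 2)) (i j : Fin 2) : Prop :=
  i ∈ R ∧ (∀ i' ∈ R, u1 i' j ≤ u1 i j) ∧ (∀ j' : Fin 2, u2 i j' ≤ u2 i j)

theorem capability_can_decrease_payoff :
    (isNE {0} 0 0 ∧ (∀ i j : Fin 2, isNE {0} i j → i = 0 ∧ j = 0) ∧
      u1 0 0 = 1 ∧ u2 0 0 = 2) ∧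
    (isNE Finset.univ 1 1 ∧ (∀ i j : Fin 2, isNE Finset.univ i j → i = 1 ∧ j = 1) ∧
      u1 1 1 = 0 ∧ u2 1 1 = 2) := by
  unfold isNE
  constructor <;> refine ⟨?_, ?_, by decide, by decide⟩ <;> first
    | decide
    | (intro i j h; fin_cases i <;> fin_cases j <;> revert h <;> decide)
end

section
/- Let f : {0,...,4M-1} → {0,1} be a strategy whose discontinuity points are constrained so that every upward discontinuity point i satisfies i ≡ 2 (mod 4) and every downward discontinuity point i satisfies i ≡ 0 (mod 4). Then the number of gold sites covered by f equals M + ⌊(seg(f) + f(0) − 1)/2⌋ and the number of mine sites covered by f equals M − ⌊(seg(f) − f(0))/2⌋. -/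
open Finset

/-- Number of segments of a strategy `f` on locations `0, ..., 4*M-1`. -/
def seg (M : ℕ) (f : ℕ → ℕ) : ℕ :=
  ((Finset.range (4*M - 1)).filter (fun i => f i ≠ f (i+1))).card + 1

/-- Upward discontinuity points of `f`. -/
def udp (M : ℕ) (f : ℕ → ℕ) : Finset ℕ :=
  (Finset.range (4*M - 1)).filter (fun i => f i = 0 ∧ f (i+1) = 1)

/-- Downward discontinuity points of `f`. -/
def ddp (M : ℕ) (f : ℕ → ℕ) : Finset ℕ :=
  (Finset.range (4*M - 1)).filter (fun i => f i = 1 ∧ f (i+1) = 0)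

/-- Gold sites covered by `f`: locations `i` with `i % 4 ≤ 1` and `f i = (i+1) % 2`. -/
def goldCov (M : ℕ) (f : ℕ → ℕ) : Finset ℕ :=
  (Finset.range (4*M)).filter (fun i => i % 4 ≤ 1 ∧ f i = (i+1) % 2)

/-- Mine sites covered by `f`: locations `i` with `i % 4 ≥ 2` and `f i = (i+1) % 2`. -/
def mineCov (M : ℕ) (f : ℕ → ℕ) : Finset ℕ :=
  (Finset.range (4*M)).filter (fun i => 2 ≤ i % 4 ∧ f i = (i+1) % 2)

/-! The constraints on the jumps cut the locations into blocks `4k, …, 4k+3` in which `f` can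
jump only down from `4k` to `4k+1` and only up from `4k+2` to `4k+3`. So each block covers one
gold site, plus one if `f` jumps down at `4k`, and one mine site, minus one if `f` jumps up at
`4k+2`: the gold count is `M + #ddp` and the mine count `M - #udp`. As `f` is `0`-`1` valued its
jumps alternate, so `#udp + #ddp = seg - 1` and `#udp + f 0 = #ddp + f (4M-1)`, which yields
the two floors. -/

theorem card_filter_range_four_mul (p : ℕ → Prop) [DecidablePred p] (M : ℕ) :
    #((range (4 * M)).filter p) = ∑ k ∈ range M,
      ((if p (4 * k) then 1 else 0) + (if p (4 * k + 1) then 1 else 0) +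
        (if p (4 * k + 2) then 1 else 0) + (if p (4 * k + 3) then 1 else 0)) := by
  rw [card_filter]
  induction M with
  | zero => simp
  | succ M ih =>
    rw [show 4 * (M + 1) = 4 * M + 3 + 1 by ring, sum_range_succ, sum_range_succ, sum_range_succ,
      sum_range_succ, ih, sum_range_succ]
    simp only [add_assoc]

theorem card_filter_of_forall_mod_four_eq {p : ℕ → Prop} [DecidablePred p] {M r : ℕ}
    (hr : r < 3) (h : ∀ i ∈ (range (4 * M - 1)).filter p, i % 4 = r) :
    #((range (4 * M - 1)).filter p) = #((range M).filter fun k => p (4 * k + r)) := by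
  have hmap : (range (4 * M - 1)).filter p =
      ((range M).filter fun k => p (4 * k + r)).image (4 * · + r) := by
    ext i
    simp only [mem_filter, mem_range, mem_image]
    constructor
    · rintro ⟨hi, hpi⟩
      have := h i (mem_filter.2 ⟨mem_range.2 hi, hpi⟩)
      exact ⟨i / 4, ⟨by omega, by rwa [show 4 * (i / 4) + r = i by omega]⟩, by omega⟩
    · rintro ⟨k, ⟨hk, hpk⟩, rfl⟩
      exact ⟨by omega, hpk⟩
  rw [hmap, card_image_of_injective _ fun a b hab => by omega]

section

variable {f : ℕ → ℕ}

theorem card_up_add_eq_card_down_add (hf : ∀ i, f i ≤ 1) (n : ℕ) :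
    #((range n).filter fun i => f i = 0 ∧ f (i + 1) = 1) + f 0 =
      #((range n).filter fun i => f i = 1 ∧ f (i + 1) = 0) + f n := by
  induction n with
  | zero => simp
  | succ n ih =>
    have := hf n; have := hf (n + 1)
    rw [card_filter, card_filter, sum_range_succ, sum_range_succ, ← card_filter, ← card_filter]
    split_ifs <;> omega

theorem card_filter_ne_succ (hf : ∀ i, f i ≤ 1) (n : ℕ) :
    #((range n).filter fun i => f i ≠ f (i + 1)) =
      #((range n).filter fun i => f i = 0 ∧ f (i + 1) = 1) +
        #((range n).filter fun i => f i = 1 ∧ f (i + 1) = 0) := by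
  rw [← card_union_of_disjoint (disjoint_filter.2 fun i _ h h' => by omega), ← filter_or]
  refine congrArg card (filter_congr fun i _ => ?_)
  have := hf i; have := hf (i + 1)
  omega

theorem card_goldCov (hf : ∀ i, f i ≤ 1) {M : ℕ} (hudp : ∀ i ∈ udp M f, i % 4 = 2) :
    #(goldCov M f) = M + #((range M).filter fun k => f (4 * k) = 1 ∧ f (4 * k + 1) = 0) := by
  rw [goldCov, card_filter_range_four_mul, card_filter]
  calc _ = ∑ k ∈ range M, (1 + if f (4 * k) = 1 ∧ f (4 * k + 1) = 0 then 1 else 0) :=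
        sum_congr rfl fun k hk => ?_
    _ = _ := by simp [sum_add_distrib]
  have no_up : ¬(f (4 * k) = 0 ∧ f (4 * k + 1) = 1) := fun hup => by
    have := hudp (4 * k) (mem_filter.2 ⟨mem_range.2 (by have := mem_range.1 hk; omega), hup⟩)
    omega
  have := hf (4 * k); have := hf (4 * k + 1)
  split_ifs <;> omega

theorem card_mineCov_add (hf : ∀ i, f i ≤ 1) {M : ℕ} (hddp : ∀ i ∈ ddp M f, i % 4 = 0) :
    #(mineCov M f) + #((range M).filter fun k => f (4 * k + 2) = 0 ∧ f (4 * k + 3) = 1) = M := by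
  rw [mineCov, card_filter_range_four_mul, card_filter, ← sum_add_distrib]
  calc _ = ∑ _k ∈ range M, 1 := sum_congr rfl fun k hk => ?_
    _ = M := by simp
  have no_down : ¬(f (4 * k + 2) = 1 ∧ f (4 * k + 3) = 0) := fun hdown => by
    have := hddp (4 * k + 2) (mem_filter.2 ⟨mem_range.2 (by have := mem_range.1 hk; omega), hdown⟩)
    omega
  have := hf (4 * k + 2); have := hf (4 * k + 3)
  split_ifs <;> omega

end

theorem gold_mine_count_general (M : ℕ) (f : ℕ → ℕ) (hf : ∀ i, f i ≤ 1)
    (hudp : ∀ i ∈ udp M f, i % 4 = 2) (hddp : ∀ i ∈ ddp M f, i % 4 = 0) :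
    (goldCov M f).card = M + (seg M f + f 0 - 1) / 2 ∧
    (mineCov M f).card = M - (seg M f - f 0) / 2 := by
  have hseg : seg M f = #(udp M f) + #(ddp M f) + 1 := congrArg (· + 1) (card_filter_ne_succ hf _)
  have halt : #(udp M f) + f 0 = #(ddp M f) + f (4 * M - 1) := card_up_add_eq_card_down_add hf _
  have hdown : #(ddp M f) = #((range M).filter fun k => f (4 * k) = 1 ∧ f (4 * k + 1) = 0) :=
    card_filter_of_forall_mod_four_eq (by norm_num) hddp
  have hup : #(udp M f) = #((range M).filter fun k => f (4 * k + 2) = 0 ∧ f (4 * k + 3) = 1) :=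
    card_filter_of_forall_mod_four_eq (by norm_num) hudp
  have hgold := card_goldCov hf hudp
  have hmine := card_mineCov_add hf hddp
  have := hf (4 * M - 1)
  constructor <;> omega

theorem gold_mine_count (M : ℕ) (hM : 1 ≤ M) (f : ℕ → ℕ) (hf : ∀ i, f i ≤ 1)
    (hudp : ∀ i ∈ udp M f, i % 4 = 2) (hddp : ∀ i ∈ ddp M f, i % 4 = 0) :
    (goldCov M f).card = M + (seg M f + f 0 - 1) / 2 ∧
    (mineCov M f).card = M - (seg M f - f 0) / 2 :=
  gold_mine_count_general M f hf hudp hddp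
end

section
/- Let 0 ≤ i < j ≤ M and let f : {0,...,4M-1} → {0,1} be any strategy that covers every gold site in [4i,4j−1] and no mine site in [4i,4j−1]. Then, restricted to that interval, the number of indices k with 4i ≤ k < 4j−1 and f(k) ≠ f(k+1) is at least 2(j−i)−1. -/
open Finset

theorem perfect_cover_needs_segments (M : ℕ) (hM : 1 ≤ M) (i j : ℕ)
    (hij : i < j) (hjM : j ≤ M) (f : ℕ → ℕ) (hf : ∀ k, f k ≤ 1)
    (hgold : ∀ k, 4*i ≤ k → k ≤ 4*j - 1 → k % 4 ≤ 1 → f k = (k+1) % 2)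
    (hmine : ∀ k, 4*i ≤ k → k ≤ 4*j - 1 → 2 ≤ k % 4 → f k ≠ (k+1) % 2) :
    2*(j - i) - 1 ≤ ((Finset.Ico (4*i) (4*j - 1)).filter (fun k => f k ≠ f (k+1))).card := by
  have h1 : ∀ t < 2*(j-i), (4*i + 2*t) ∈
      (Finset.Ico (4*i) (4*j - 1)).filter (fun k => f k ≠ f (k+1)) := by
    intro t ht
    have hk1 : 4*i + 2*t + 1 ≤ 4*j - 1 := by omega
    have hk0 : 4*i + 2*t ≤ 4*j - 1 := by omega
    simp only [Finset.mem_filter, Finset.mem_Ico]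
    refine ⟨⟨Nat.le_add_right _ _, by omega⟩, ?_⟩
    rcases Nat.even_or_odd t with ⟨u, hu⟩ | ⟨u, hu⟩
    · have hg1 := hgold (4*i+2*t) (by omega) hk0 (by omega)
      have hg2 := hgold (4*i+2*t+1) (by omega) hk1 (by omega)
      omega
    · have hm1 := hmine (4*i+2*t) (by omega) hk0 (by omega)
      have hm2 := hmine (4*i+2*t+1) (by omega) hk1 (by omega)
      have h3 := hf (4*i+2*t)
      have h4 := hf (4*i+2*t+1)
      omega
  have h2 : (Finset.range (2*(j-i))).image (fun t => 4*i+2*t) ⊆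
      (Finset.Ico (4*i) (4*j - 1)).filter (fun k => f k ≠ f (k+1)) := by
    intro x hx
    simp only [Finset.mem_image, Finset.mem_range] at hx
    obtain ⟨t, ht, rfl⟩ := hx
    exact h1 t ht
  have h3 := Finset.card_le_card h2
  rw [Finset.card_image_of_injective _ (fun a b h => by omega),
    Finset.card_range] at h3
  omega
end

section
/- There exists a strategy with exactly 2M+1 segments that perfectly covers all 4M resources: f(k) = (k+1) mod 2 if k mod 4 ≤ 1, and f(k) = k mod 2 otherwise, covers all 2M gold sites, no mine sites, and has seg(f) = 2M+1. -/
open Finset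

/-- The explicit perfect-cover strategy. -/
def perfectStrategy : ℕ → ℕ := fun k => if k % 4 ≤ 1 then (k+1) % 2 else k % 2

theorem perfect_strategy_props (M : ℕ) (hM : 1 ≤ M) :
    (goldCov M perfectStrategy).card = 2*M ∧
    (mineCov M perfectStrategy).card = 0 ∧
    seg M perfectStrategy = 2*M + 1 := by
  have heven : ∀ n : ℕ, ((Finset.range n).filter (fun i => i % 2 = 0)).card = (n+1)/2 := by
    intro n
    induction n with
    | zero => simp
    | succ n ih =>
      rw [Finset.range_add_one, Finset.filter_insert]
      by_cases h : n % 2 = 0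
      · rw [if_pos h, Finset.card_insert_of_notMem (by simp), ih]; omega
      · rw [if_neg h, ih]; omega
  refine ⟨?_, ?_, ?_⟩
  · have : goldCov M perfectStrategy = (Finset.range (4*M)).filter (fun i => i % 4 ≤ 1) := by
      apply Finset.filter_congr
      intro i _
      simp only [perfectStrategy]
      constructor
      · rintro ⟨h, _⟩; exact h
      · intro h; exact ⟨h, by rw [if_pos h]⟩
    rw [this]
    have : ∀ m : ℕ, ((Finset.range (4*m)).filter (fun i => i % 4 ≤ 1)).card = 2*m := by
      intro m
      induction m with
      | zero => simp
      | succ m ih =>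
        have h4 : 4*(m+1) = (4*m+3)+1 := by ring
        rw [h4, Finset.range_add_one, Finset.filter_insert, if_neg (by omega),
          show 4*m+3 = (4*m+2)+1 from rfl, Finset.range_add_one, Finset.filter_insert,
          if_neg (by omega), show 4*m+2 = (4*m+1)+1 from rfl, Finset.range_add_one,
          Finset.filter_insert, if_pos (by omega), show 4*m+1 = (4*m)+1 from rfl,
          Finset.range_add_one, Finset.filter_insert, if_pos (by omega),
          Finset.card_insert_of_notMem (by simp), Finset.card_insert_of_notMem (by simp),
          ih]
        omega
    rw [this]
  · rw [Finset.card_eq_zero]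
    unfold mineCov
    rw [Finset.filter_eq_empty_iff]
    intro i _
    simp only [perfectStrategy]
    rintro ⟨h2, heq⟩
    rw [if_neg (by omega)] at heq
    omega
  · have : ∀ i : ℕ, (perfectStrategy i ≠ perfectStrategy (i+1)) ↔ i % 2 = 0 := by
      intro i
      simp only [perfectStrategy]
      split_ifs <;> omega
    unfold seg
    rw [Finset.filter_congr (fun i _ => by rw [this i]), heven]
    omega
end

section
/- In the MGMG payoff decomposition, if two strategies f and f' of player A have the same number of segments C_A and satisfy the coverage-count formulas of the game, and T' > T (player A's alternative covers strictly more total gold sites jointly with B), then A's payoff strictly increases: the payoff difference satisfies (h(f'(0)) − h(f(0))) + (T' − T)(1 − ρ) ≥ (ρ+μ) + (1−ρ) > 0, given 0 < ρ < −μ < 1. -/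
theorem more_gold_better (ρ μ : ℝ) (hρ : 0 < ρ) (hρμ : ρ < -μ) (hμ : -μ < 1)
    (C : ℕ) (hC : 1 ≤ C) (T T' : ℤ) (hT : T < T') (x x' : ℕ) (hx : x ≤ 1) (hx' : x' ≤ 1) :
    0 < ((ρ * ((C + x' - 1) / 2 : ℕ) - μ * ((C - x') / 2 : ℕ)) -
         (ρ * ((C + x - 1) / 2 : ℕ) - μ * ((C - x) / 2 : ℕ))) +
        ((T' : ℝ) - T) * (1 - ρ) := by
  set a := ((C + x - 1) / 2 : ℕ) with ha
  set b := ((C - x) / 2 : ℕ) with hb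
  set a' := ((C + x' - 1) / 2 : ℕ) with ha'
  set b' := ((C - x') / 2 : ℕ) with hb'
  have h1 : a + b = C - 1 := by omega
  have h2 : a' + b' = C - 1 := by omega
  have h3 : a ≤ a' + 1 ∧ a' ≤ a + 1 := by omega
  have h4 : b ≤ b' + 1 ∧ b' ≤ b + 1 := by omega
  have hab : (a' : ℝ) - a = -((b' : ℝ) - b) := by
    have : (a : ℤ) + b = a' + b' := by omega
    push_cast
    nlinarith [this, (by exact_mod_cast congrArg (Int.cast : ℤ → ℝ) this : (a : ℝ) + b = a' + b')]
  have hd1 : (a' : ℝ) ≤ a + 1 := by exact_mod_cast h3.2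
  have hd2 : (a : ℝ) ≤ a' + 1 := by exact_mod_cast h3.1
  have hTT : (T : ℝ) + 1 ≤ T' := by exact_mod_cast hT
  nlinarith [hab, hd1, hd2, hTT, hρ, hρμ, hμ]
end

section
/- If both players in the MGMG have capability at least 2M+1 and 0 < ρ < −μ < 1, and both play the perfect-cover strategy (covering all 2M gold sites and no mine sites), then each player receives payoff 2Mρ, and this strategy profile is a pure Nash equilibrium: no unilateral deviation (to any strategy f : {0,...,4M-1} → {0,1}) yields a strictly higher payoff. -/
open Finset

/-- Payoff of a player playing `fA` against an opponent playing `fB`: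
`1` for each gold site covered exclusively, `ρ` for each shared gold site,
`μ` for each covered mine site. -/
def pay (M : ℕ) (ρ μ : ℝ) (fA fB : ℕ → ℕ) : ℝ :=
  ((goldCov M fA \ goldCov M fB).card : ℝ)
    + ρ * ((goldCov M fA ∩ goldCov M fB).card : ℝ)
    + μ * ((mineCov M fA).card : ℝ)

lemma goldPerf (M : ℕ) :
    goldCov M perfectStrategy = (Finset.range (4*M)).filter (fun i => i % 4 ≤ 1) := by
  ext i
  simp only [goldCov, Finset.mem_filter, Finset.mem_range]
  simp only [perfectStrategy]
  constructor
  · rintro ⟨h1, h2, _⟩; exact ⟨h1, h2⟩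
  · rintro ⟨h1, h2⟩; exact ⟨h1, h2, by rw [if_pos h2]⟩

lemma minePerf (M : ℕ) : mineCov M perfectStrategy = ∅ := by
  rw [Finset.eq_empty_iff_forall_notMem]
  intro i hi
  simp only [mineCov, Finset.mem_filter] at hi
  simp only [perfectStrategy] at hi
  obtain ⟨_, h2, h3⟩ := hi
  rw [if_neg (by omega)] at h3
  omega

lemma gold_card (M : ℕ) :
    ((Finset.range (4*M)).filter (fun i => i % 4 ≤ 1)).card = 2*M := by
  induction M with
  | zero => simp
  | succ n ih =>
    have h4 : 4*(n+1) = (4*n + 1 + 1 + 1) + 1 := by ring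
    rw [h4, Finset.range_add_one, Finset.range_add_one, Finset.range_add_one, Finset.range_add_one,
      Finset.filter_insert, Finset.filter_insert, Finset.filter_insert, Finset.filter_insert]
    have m0 : (4*n) % 4 = 0 := by omega
    have m1 : (4*n+1) % 4 = 1 := by omega
    have m2 : (4*n+1+1) % 4 = 2 := by omega
    have m3 : (4*n+1+1+1) % 4 = 3 := by omega
    rw [if_neg (by omega), if_neg (by omega), if_pos (by omega), if_pos (by omega)]
    rw [Finset.card_insert_of_notMem (by simp), Finset.card_insert_of_notMem (by simp)]
    omega

lemma gold_sub (M : ℕ) (f : ℕ → ℕ) : goldCov M f ⊆ goldCov M perfectStrategy := by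
  intro i hi
  rw [goldPerf]
  simp only [goldCov, Finset.mem_filter] at hi ⊢
  exact ⟨hi.1, hi.2.1⟩

theorem perfect_cover_equilibrium (M : ℕ) (hM : 1 ≤ M) (ρ μ : ℝ)
    (hρ : 0 < ρ) (hρμ : ρ < -μ) (hμ : -μ < 1) :
    pay M ρ μ perfectStrategy perfectStrategy = 2*M*ρ ∧
    (∀ f : ℕ → ℕ, (∀ i, f i ≤ 1) →
      pay M ρ μ f perfectStrategy ≤ pay M ρ μ perfectStrategy perfectStrategy) := by
  have hpp : pay M ρ μ perfectStrategy perfectStrategy = 2*M*ρ := by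
    unfold pay
    rw [Finset.sdiff_self, Finset.inter_self, minePerf, goldPerf, gold_card]
    simp only [Finset.card_empty, Nat.cast_zero]
    push_cast
    ring
  refine ⟨hpp, fun f hf => ?_⟩
  rw [hpp]
  unfold pay
  rw [Finset.sdiff_eq_empty_iff_subset.mpr (gold_sub M f),
    Finset.inter_eq_left.mpr (gold_sub M f)]
  have hcard : (goldCov M f).card ≤ 2*M := by
    calc (goldCov M f).card ≤ (goldCov M perfectStrategy).card :=
          Finset.card_le_card (gold_sub M f)
      _ = 2*M := by rw [goldPerf, gold_card]
  have h1 : ρ * ((goldCov M f).card : ℝ) ≤ 2*M*ρ := by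
    have : ((goldCov M f).card : ℝ) ≤ 2*M := by exact_mod_cast hcard
    nlinarith
  have h2 : μ * ((mineCov M f).card : ℝ) ≤ 0 := by
    have hm : (0:ℝ) ≤ ((mineCov M f).card : ℝ) := Nat.cast_nonneg _
    nlinarith
  simp only [Finset.card_empty, Nat.cast_zero]
  linarith
end

section
/- Every finite congestion game of MGMG form admits a pure Nash equilibrium: any exact potential game on finite strategy spaces has a pure Nash equilibrium, where the Rosenthal potential Φ(s) = Σ_{resources e} Σ_{k=1}^{n_e(s)} r_e(k) strictly increases under any strictly improving unilateral deviation. -/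
/-!
For a fixed player `i`, the Rosenthal potential splits as the potential of the load that the
other players put on the resources, which does not see `i`'s strategy, plus `i`'s own payoff:
on every resource `e` that `i` uses, the top summand `r e (n e)` of `∑ k ∈ [1, n e], r e k` is
exactly what `i` collects from `e`. Hence `Φ` is an exact potential, and a maximiser of `Φ` over
the finitely many strategy profiles is a pure Nash equilibrium.
-/

open Finset

theorem Finset.sum_Icc_one_add_ite {M : Type*} [AddCommMonoid M] (f : ℕ → M) (m : ℕ) (p : Prop)
    [Decidable p] :
    ∑ k ∈ Icc 1 (m + if p then 1 else 0), f k = ∑ k ∈ Icc 1 m, f k + if p then f (m + 1) else 0 := by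
  split_ifs
  · exact sum_Icc_succ_top (by omega) f
  · rw [add_zero, add_zero]

section PotentialGame

variable {ι R : Type*} [Fintype ι] [DecidableEq ι] {σ : ι → Type*}
  [AddCommGroup R] [LinearOrder R] [IsOrderedAddMonoid R]

theorem exists_pureNash_of_exactPotential (S : ∀ i, Finset (σ i)) (hS : ∀ i, (S i).Nonempty)
    (pay : ι → (∀ i, σ i) → R) (Φ : (∀ i, σ i) → R)
    (hΦ : ∀ s ∈ Fintype.piFinset S, ∀ i, ∀ a ∈ S i,
      pay i (Function.update s i a) - pay i s = Φ (Function.update s i a) - Φ s) :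
    ∃ s ∈ Fintype.piFinset S, ∀ i, ∀ a ∈ S i, pay i (Function.update s i a) ≤ pay i s := by
  obtain ⟨s, hs, hmax⟩ := exists_max_image _ Φ (Fintype.piFinset_nonempty.mpr hS)
  refine ⟨s, hs, fun i a ha => sub_nonpos.mp ?_⟩
  have hupdate : Function.update s i a ∈ Fintype.piFinset S :=
    Fintype.mem_piFinset.2 <| (Function.forall_update_iff s (p := fun j x => x ∈ S j)).2
      ⟨ha, fun j _ => Fintype.mem_piFinset.1 hs j⟩
  rw [hΦ s hs i a ha]
  exact sub_nonpos.mpr (hmax _ hupdate)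

end PotentialGame

namespace CongestionGame

variable {ι E G : Type*} [Fintype ι] [DecidableEq E]

def load (s : ι → Finset E) (e : E) : ℕ := #{i | e ∈ s i}

def payoff [AddCommMonoid G] (r : E → ℕ → G) (s : ι → Finset E) (i : ι) : G :=
  ∑ e ∈ s i, r e (load s e)

def rosenthal [Fintype E] [AddCommMonoid G] (r : E → ℕ → G) (s : ι → Finset E) : G :=
  ∑ e, ∑ k ∈ Icc 1 (load s e), r e k

variable [DecidableEq ι]

def loadExcept (s : ι → Finset E) (i : ι) (e : E) : ℕ := #(({j | e ∈ s j} : Finset ι).erase i)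

theorem load_eq_loadExcept_add (s : ι → Finset E) (i : ι) (e : E) :
    load s e = loadExcept s i e + if e ∈ s i then 1 else 0 := by
  split_ifs with he
  · exact (card_erase_add_one (s := ({j | e ∈ s j} : Finset ι)) (by simpa using he)).symm
  · rw [loadExcept, erase_eq_of_notMem (by simpa using he), add_zero, load]

theorem loadExcept_update (s : ι → Finset E) (i : ι) (a : Finset E) (e : E) :
    loadExcept (Function.update s i a) i e = loadExcept s i e := by
  rw [loadExcept, loadExcept]
  congr 1
  ext j
  simp only [mem_erase, mem_filter, mem_univ, true_and, and_congr_right_iff]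
  intro hj
  rw [Function.update_of_ne hj]

theorem rosenthal_eq_add_payoff [Fintype E] [AddCommMonoid G] (r : E → ℕ → G)
    (s : ι → Finset E) (i : ι) :
    rosenthal r s = ∑ e, ∑ k ∈ Icc 1 (loadExcept s i e), r e k + payoff r s i := by
  rw [rosenthal, payoff, ← Fintype.sum_ite_mem (s i), ← sum_add_distrib]
  refine sum_congr rfl fun e _ => ?_
  rw [load_eq_loadExcept_add s i, sum_Icc_one_add_ite]
  split_ifs <;> rfl

theorem payoff_update_sub [Fintype E] [AddCommGroup G] (r : E → ℕ → G) (s : ι → Finset E)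
    (i : ι) (a : Finset E) :
    payoff r (Function.update s i a) i - payoff r s i =
      rosenthal r (Function.update s i a) - rosenthal r s := by
  simp only [rosenthal_eq_add_payoff r _ i, loadExcept_update]
  abel

end CongestionGame

theorem congestion_game_has_pne
    (ι E : Type) [Fintype ι] [DecidableEq ι] [Fintype E] [DecidableEq E]
    (S : ι → Finset (Finset E)) (hS : ∀ i, (S i).Nonempty) (r : E → ℕ → ℝ) :
    -- `n s e` counts players using resource `e`; `pay i s` is player `i`'s payoff;
    -- `Φ` is the Rosenthal potential.
    let n : (ι → Finset E) → E → ℕ := fun s e => (Finset.univ.filter (fun i => e ∈ s i)).card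
    let pay : ι → (ι → Finset E) → ℝ := fun i s => ∑ e ∈ s i, r e (n s e)
    let Φ : (ι → Finset E) → ℝ := fun s => ∑ e : E, ∑ k ∈ Finset.Icc 1 (n s e), r e k
    -- (a) unilateral deviations change a player's payoff exactly as the potential;
    (∀ (s : ι → Finset E) (i : ι) (s' : Finset E), (∀ j, s j ∈ S j) → s' ∈ S i →
        pay i (Function.update s i s') - pay i s = Φ (Function.update s i s') - Φ s) ∧
    -- (b) a pure Nash equilibrium exists.
    (∃ s : ι → Finset E, (∀ j, s j ∈ S j) ∧
        ∀ (i : ι) (s' : Finset E), s' ∈ S i → pay i (Function.update s i s') ≤ pay i s) := by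
  intro n pay Φ
  have hΦ : ∀ s i a, pay i (Function.update s i a) - pay i s = Φ (Function.update s i a) - Φ s :=
    fun s i a => CongestionGame.payoff_update_sub r s i a
  obtain ⟨s, hs, hnash⟩ := exists_pureNash_of_exactPotential (σ := fun _ => Finset E) S hS pay Φ
    fun s _ i a _ => hΦ s i a
  exact ⟨fun s i a _ _ => hΦ s i a, s, Fintype.mem_piFinset.1 hs, hnash⟩
end

section
/- For M = 1 (four resources at locations 0,1,2,3: golds at 0 on line 1 and at 1 on line 0; mines at 2 on line 1 and at 3 on line 0) with 0 < ρ < −μ < 1 and both players having capability 1 (constant strategies only): the strategy profiles (f_A ≡ 0, f_B ≡ 1) and (f_A ≡ 1, f_B ≡ 0) are pure Nash equilibria, and the profiles where both players play the same constant are not Nash equilibria. -/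
open Finset

/-! On a single block every constant strategy covers exactly one gold site and one mine site,
and two constants cover the same gold site only when they are equal. So the payoff of `c`
against `d` is `ρ + μ` or `1 + μ`, and since `ρ < -μ < 1` the best reply to a constant is the
other constant, strictly better than copying it. -/

lemma goldCov_one_const {c : ℕ} (hc : c ≤ 1) : goldCov 1 (fun _ => c) = {1 - c} := by
  interval_cases c <;> decide

lemma mineCov_one_const {c : ℕ} (hc : c ≤ 1) : mineCov 1 (fun _ => c) = {3 - c} := by
  interval_cases c <;> decide

lemma pay_one_const (ρ μ : ℝ) {c d : ℕ} (hc : c ≤ 1) (hd : d ≤ 1) :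
    pay 1 ρ μ (fun _ => c) (fun _ => d) = (if c = d then ρ else 1) + μ := by
  rw [pay, goldCov_one_const hc, goldCov_one_const hd, mineCov_one_const hc]
  split_ifs with hcd
  · simp [hcd]
  · have hne : 1 - c ≠ 1 - d := by omega
    simp [hne, Finset.sdiff_eq_self_of_disjoint (Finset.disjoint_singleton.mpr hne)]

lemma pay_one_const_le_pay_one_const_flip (ρ μ : ℝ) (hρ : ρ ≤ 1) {c d : ℕ} (hc : c ≤ 1)
    (hd : d ≤ 1) :
    pay 1 ρ μ (fun _ => c) (fun _ => d) ≤ pay 1 ρ μ (fun _ => 1 - d) (fun _ => d) := by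
  rw [pay_one_const ρ μ hc hd, pay_one_const ρ μ (Nat.sub_le 1 d) hd,
    if_neg (show 1 - d ≠ d by omega)]
  split_ifs <;> linarith

lemma pay_one_const_self_lt_pay_one_const_flip (ρ μ : ℝ) (hρ : ρ < 1) {d : ℕ} (hd : d ≤ 1) :
    pay 1 ρ μ (fun _ => d) (fun _ => d) < pay 1 ρ μ (fun _ => 1 - d) (fun _ => d) := by
  rw [pay_one_const ρ μ hd hd, pay_one_const ρ μ (Nat.sub_le 1 d) hd, if_pos rfl,
    if_neg (show 1 - d ≠ d by omega)]
  linarith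

theorem M1_capability1_equilibria_general (ρ μ : ℝ) (hρμ : ρ < -μ) (hμ : -μ < 1) :
    -- (const 0, const 1) is a pure Nash equilibrium among constant strategies
    ((∀ c : ℕ, c ≤ 1 →
        pay 1 ρ μ (fun _ => c) (fun _ => 1) ≤ pay 1 ρ μ (fun _ => 0) (fun _ => 1)) ∧
     (∀ c : ℕ, c ≤ 1 →
        pay 1 ρ μ (fun _ => c) (fun _ => 0) ≤ pay 1 ρ μ (fun _ => 1) (fun _ => 0))) ∧
    -- (const 1, const 0) is a pure Nash equilibrium among constant strategies
    ((∀ c : ℕ, c ≤ 1 →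
        pay 1 ρ μ (fun _ => c) (fun _ => 0) ≤ pay 1 ρ μ (fun _ => 1) (fun _ => 0)) ∧
     (∀ c : ℕ, c ≤ 1 →
        pay 1 ρ μ (fun _ => c) (fun _ => 1) ≤ pay 1 ρ μ (fun _ => 0) (fun _ => 1))) ∧
    -- (const 0, const 0) is not a Nash equilibrium: some player improves by deviating
    (∃ c : ℕ, c ≤ 1 ∧
        pay 1 ρ μ (fun _ => 0) (fun _ => 0) < pay 1 ρ μ (fun _ => c) (fun _ => 0)) ∧
    -- (const 1, const 1) is not a Nash equilibrium
    (∃ c : ℕ, c ≤ 1 ∧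
        pay 1 ρ μ (fun _ => 1) (fun _ => 1) < pay 1 ρ μ (fun _ => c) (fun _ => 1)) := by
  have hρ : ρ < 1 := hρμ.trans hμ
  have best_vs_one (c : ℕ) (hc : c ≤ 1) :=
    pay_one_const_le_pay_one_const_flip ρ μ hρ.le hc (le_refl 1)
  have best_vs_zero (c : ℕ) (hc : c ≤ 1) :=
    pay_one_const_le_pay_one_const_flip ρ μ hρ.le hc (Nat.zero_le 1)
  exact ⟨⟨best_vs_one, best_vs_zero⟩, ⟨best_vs_zero, best_vs_one⟩,
    ⟨1, le_refl 1, pay_one_const_self_lt_pay_one_const_flip ρ μ hρ (Nat.zero_le 1)⟩,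
    ⟨0, Nat.zero_le 1, pay_one_const_self_lt_pay_one_const_flip ρ μ hρ (le_refl 1)⟩⟩

/-- The explicit perfect-cover strategy. -/
theorem M1_capability1_equilibria (ρ μ : ℝ) (hρ : 0 < ρ) (hρμ : ρ < -μ) (hμ : -μ < 1) :
    -- (const 0, const 1) is a pure Nash equilibrium among constant strategies
    ((∀ c : ℕ, c ≤ 1 →
        pay 1 ρ μ (fun _ => c) (fun _ => 1) ≤ pay 1 ρ μ (fun _ => 0) (fun _ => 1)) ∧
     (∀ c : ℕ, c ≤ 1 →
        pay 1 ρ μ (fun _ => c) (fun _ => 0) ≤ pay 1 ρ μ (fun _ => 1) (fun _ => 0))) ∧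
    -- (const 1, const 0) is a pure Nash equilibrium among constant strategies
    ((∀ c : ℕ, c ≤ 1 →
        pay 1 ρ μ (fun _ => c) (fun _ => 0) ≤ pay 1 ρ μ (fun _ => 1) (fun _ => 0)) ∧
     (∀ c : ℕ, c ≤ 1 →
        pay 1 ρ μ (fun _ => c) (fun _ => 1) ≤ pay 1 ρ μ (fun _ => 0) (fun _ => 1))) ∧
    -- (const 0, const 0) is not a Nash equilibrium: some player improves by deviating
    (∃ c : ℕ, c ≤ 1 ∧
        pay 1 ρ μ (fun _ => 0) (fun _ => 0) < pay 1 ρ μ (fun _ => c) (fun _ => 0)) ∧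
    -- (const 1, const 1) is not a Nash equilibrium
    (∃ c : ℕ, c ≤ 1 ∧
        pay 1 ρ μ (fun _ => 1) (fun _ => 1) < pay 1 ρ μ (fun _ => c) (fun _ => 1)) :=
  M1_capability1_equilibria_general ρ μ hρμ hμ
end

section
/- For any strategy f_B : {0,...,4M−1} → {0,1} conforming to the discontinuity constraints, there exists a strategy f_A with seg(f_A) ≤ seg(f_B) such that together f_A and f_B cover all 2M gold sites: |G(f_A) ∪ G(f_B)| = 2M. -/
open Finset

lemma gold_count (n : ℕ) :
    ((Finset.range (4*n)).filter (fun i => i % 4 ≤ 1)).card = 2*n := by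
  induction n with
  | zero => simp
  | succ n ih =>
    have h : 4*(n+1) = (4*n)+1+1+1+1 := by ring
    rw [h, Finset.range_add_one, Finset.range_add_one, Finset.range_add_one, Finset.range_add_one,
      Finset.filter_insert, Finset.filter_insert, Finset.filter_insert, Finset.filter_insert]
    rw [if_neg (by omega), if_neg (by omega), if_pos (by omega), if_pos (by omega)]
    rw [Finset.card_insert_of_notMem, Finset.card_insert_of_notMem]
    · omega
    · intro hmem
      have := Finset.mem_range.mp (Finset.mem_filter.mp hmem).1
      omega
    · intro hmem
      rcases Finset.mem_insert.mp hmem with h1 | h1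
      · omega
      · have := Finset.mem_range.mp (Finset.mem_filter.mp h1).1
        omega

theorem complete_gold_coverage_feasible (M : ℕ) (hM : 1 ≤ M)
    (fB : ℕ → ℕ) (hfB : ∀ i, fB i ≤ 1)
    (hudp : ∀ i ∈ udp M fB, i % 4 = 2) (hddp : ∀ i ∈ ddp M fB, i % 4 = 0) :
    ∃ fA : ℕ → ℕ, (∀ i, fA i ≤ 1) ∧ seg M fA ≤ seg M fB ∧
      (goldCov M fA ∪ goldCov M fB).card = 2*M := by
  refine ⟨fun i => 1 - fB i, fun i => Nat.sub_le 1 (fB i), ?_, ?_⟩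
  · unfold seg
    have : ∀ i, ((1 - fB i ≠ 1 - fB (i+1)) ↔ (fB i ≠ fB (i+1))) := by
      intro i
      have h1 := hfB i
      have h2 := hfB (i+1)
      constructor <;> intro h <;> omega
    simp only [Finset.filter_congr (fun i _ => this i)]
    exact le_refl _
  · have hU : goldCov M (fun i => 1 - fB i) ∪ goldCov M fB
        = (Finset.range (4*M)).filter (fun i => i % 4 ≤ 1) := by
      ext i
      simp only [Finset.mem_union, goldCov, Finset.mem_filter, Finset.mem_range]
      constructor
      · rintro (⟨h1, h2, _⟩ | ⟨h1, h2, _⟩) <;> exact ⟨h1, h2⟩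
      · rintro ⟨h1, h2⟩
        by_cases h : fB i = (i+1) % 2
        · exact Or.inr ⟨h1, h2, h⟩
        · refine Or.inl ⟨h1, h2, ?_⟩
          have ha := hfB i
          have hb : (i+1) % 2 < 2 := Nat.mod_lt _ (by norm_num)
          omega
    rw [hU, gold_count]
end
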